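/- Let Q(s,a) = ⟨φ(s,a), w⟩ for some w ∈ ℝ^d, let η > 0, let θ⁺ = θ + η w, and let F : 𝒮 → ℝ be an arbitrary function. Then for every state-action pair (s,a): Q(s,a) − F(s) = (1/η)·[ log( π_{θ⁺}(a|s) / π_θ(a|s) ) + log( ∑_{a' ∈ 𝒜} π_θ(a'|s) · e^{η (Q(s,a') − F(s))} ) ]. -/

import Mathlib

open scoped BigOperators

/-- The soft-max policy with parameter `θ` induced by the feature map `φ`:
`π_θ(a|s) = exp(⟨φ(s,a), θ⟩) / ∑_{a'} exp(⟨φ(s,a'), θ⟩)`. -/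
noncomputable def softmaxPolicy {S A : Type*} [Fintype A] {d : ℕ}
    (φ : S → A → EuclideanSpace ℝ (Fin d)) (θ : EuclideanSpace ℝ (Fin d))
    (s : S) (a : A) : ℝ :=
  Real.exp (inner ℝ (φ s a) θ : ℝ) / ∑ a' : A, Real.exp (inner ℝ (φ s a') θ : ℝ)

/-!
Writing `g = ⟨φ(s,·), θ⟩` for the logits, the update adds `η Q(s,·)` to them, and adding
logits `h` to a soft-max distribution `π_g` reweights it by `exp h` and renormalises:
`π_{g+h}(a) = π_g(a) e^{h(a)} / ∑_{a'} π_g(a') e^{h(a')}`. Taking logarithms gives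
`h(a) = log(π_{g+h}(a)/π_g(a)) + log ∑_{a'} π_g(a') e^{h(a')}`, and the baseline `F(s)` only
pulls the factor `e^{-η F(s)}` out of the last sum.
-/

open Real Finset

noncomputable def softmax {A : Type*} [Fintype A] (g : A → ℝ) (a : A) : ℝ :=
  exp (g a) / ∑ a', exp (g a')

section Softmax

variable {A : Type*} [Fintype A]

theorem sum_softmax_mul_exp (g h : A → ℝ) :
    ∑ a, softmax g a * exp (h a) = (∑ a, exp (g a + h a)) / ∑ a, exp (g a) := by
  simp only [softmax, div_mul_eq_mul_div, ← exp_add, ← sum_div]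

variable [Nonempty A]

theorem sum_exp_pos (g : A → ℝ) : 0 < ∑ a, exp (g a) :=
  sum_pos (fun _ _ ↦ exp_pos _) univ_nonempty

theorem softmax_pos (g : A → ℝ) (a : A) : 0 < softmax g a :=
  div_pos (exp_pos _) (sum_exp_pos g)

theorem softmax_add (g h : A → ℝ) (a : A) :
    softmax (g + h) a = softmax g a * exp (h a) / ∑ a', softmax g a' * exp (h a') := by
  have hZ := (sum_exp_pos g).ne'
  rw [sum_softmax_mul_exp, softmax, softmax, Pi.add_apply, exp_add]
  simp only [Pi.add_apply]
  field_simp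

theorem sum_softmax_mul_exp_pos (g h : A → ℝ) : 0 < ∑ a, softmax g a * exp (h a) :=
  sum_pos (fun _ _ ↦ mul_pos (softmax_pos g _) (exp_pos _)) univ_nonempty

theorem log_softmax_add_div_softmax (g h : A → ℝ) (a : A) :
    log (softmax (g + h) a / softmax g a)
      = h a - log (∑ a', softmax g a' * exp (h a')) := by
  rw [softmax_add, mul_div_assoc, mul_div_cancel_left₀ _ (softmax_pos g a).ne',
    log_div (exp_pos _).ne' (sum_softmax_mul_exp_pos g h).ne', log_exp]

end Softmax

theorem softmaxPolicy_eq_softmax {S A : Type*} [Fintype A] {d : ℕ}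
    (φ : S → A → EuclideanSpace ℝ (Fin d)) (θ : EuclideanSpace ℝ (Fin d)) (s : S) :
    softmaxPolicy φ θ s = softmax (fun a ↦ inner ℝ (φ s a) θ) :=
  rfl

theorem statement_2_general {S A : Type*} [Fintype A] [Nonempty A] {d : ℕ}
    (φ : S → A → EuclideanSpace ℝ (Fin d))
    (w θ : EuclideanSpace ℝ (Fin d)) (η : ℝ) (hη : 0 < η)
    (Q : S → A → ℝ) (hQ : ∀ s a, Q s a = (inner ℝ (φ s a) w : ℝ))
    (F : S → ℝ) (s : S) (a : A) :
    Q s a - F s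
      = (1 / η) * (Real.log (softmaxPolicy φ (θ + η • w) s a / softmaxPolicy φ θ s a)
          + Real.log (∑ a' : A, softmaxPolicy φ θ s a' * Real.exp (η * (Q s a' - F s)))) := by
  set g : A → ℝ := fun a ↦ inner ℝ (φ s a) θ
  have hlogits : softmaxPolicy φ (θ + η • w) s = softmax (g + fun a ↦ η * Q s a) := by
    ext a
    simp only [softmaxPolicy_eq_softmax, inner_add_right, real_inner_smul_right, hQ]
    rfl
  have hbaseline : ∑ a', softmax g a' * exp (η * (Q s a' - F s))
      = (∑ a', softmax g a' * exp (η * Q s a')) * exp (-(η * F s)) := by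
    rw [sum_mul]
    simp only [mul_sub, exp_sub, exp_neg, mul_assoc, div_eq_mul_inv]
  rw [hlogits, softmaxPolicy_eq_softmax, log_softmax_add_div_softmax, hbaseline,
    log_mul (sum_softmax_mul_exp_pos g _).ne' (exp_pos _).ne', log_exp]
  field_simp
  ring

/-- For the linear `Q(s,a) = ⟨φ(s,a), w⟩`, the update `θ⁺ = θ + η w`, and any baseline
function `F : 𝒮 → ℝ`,
`Q(s,a) − F(s) = (1/η)[log(π_{θ⁺}(a|s)/π_θ(a|s)) + log(∑_{a'} π_θ(a'|s) e^{η(Q(s,a') − F(s))})]`. -/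
theorem statement_2 {S A : Type*} [Fintype A] [Nonempty A] {d : ℕ}
    (φ : S → A → EuclideanSpace ℝ (Fin d))
    (hφ : ∀ s a, ‖φ s a‖ ≤ 1)
    (w θ : EuclideanSpace ℝ (Fin d)) (η : ℝ) (hη : 0 < η)
    (Q : S → A → ℝ) (hQ : ∀ s a, Q s a = (inner ℝ (φ s a) w : ℝ))
    (F : S → ℝ) (s : S) (a : A) :
    Q s a - F s
      = (1 / η) * (Real.log (softmaxPolicy φ (θ + η • w) s a / softmaxPolicy φ θ s a)
          + Real.log (∑ a' : A, softmaxPolicy φ θ s a' * Real.exp (η * (Q s a' - F s)))) :=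
  statement_2_general φ w θ η hη Q hQ F s a
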